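/- Let G be a simple connected graph with m vertices and n edges, let A = A(G) ∈ ℤ^{(m−1)×n} be its reduced incidence matrix with columns a₁,…,aₙ, let K > 0, and let ω ∈ ℝ^{m−1} satisfy ω/K ∈ Ω⁺ = {A·x : x ∈ 𝒮_A⁺}. Let x* ∈ 𝒮_A⁺ be the unique point with A·x* = ω/K, and let θ* ∈ ℝ^{m−1} be the unique solution of Aᵀθ* = arcsin(x*) (arcsin applied coordinatewise). Then θ* is a steady state of the Kuramoto system θ̇ = ω − K·A·(sin(a₁·θ),…,sin(aₙ·θ))ᵀ, cos(a_ℓ·θ*) > 0 for all ℓ = 1,…,n, and θ* is linearly stable: the symmetric Jacobian matrix −K·A·diag(cos(a₁·θ*),…,cos(aₙ·θ*))·Aᵀ is negative definite. -/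

import Mathlib

/-
Write `x* = sin y` with `y` in the relative interior of `P`. Each row of `A` is a direction of the
affine span of `P` (a small multiple of it lies in `P`, as does `0`), so `y` can be moved a little
along a row in both directions inside `P`; since every column of `A` is nonzero, every coordinate of
`y` is then strictly inside `(-π/2, π/2)`. Hence `Aᵀθ* = arcsin (sin y) = y`, which gives the
steady-state equations and `cos (a_ℓ·θ*) > 0`. The quadratic form of the Jacobian at `v` is
`-K ∑_ℓ cos (a_ℓ·θ*) (a_ℓ·v)²`, and `Aᵀv = 0` forces `v = 0`: `(Aᵀv)_ℓ` is the difference across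
edge `ℓ` of `v` extended by `0` at the last vertex, which is constant on a connected graph.
-/

noncomputable section


/-- The real row span of the integer matrix `A`. -/
def rowSpanR {d n : ℕ} (A : Matrix (Fin d) (Fin n) ℤ) : Submodule ℝ (Fin n → ℝ) :=
  Submodule.span ℝ (Set.range fun i : Fin d => fun j : Fin n => (A i j : ℝ))

/-- The polytope `P = Row(A) ∩ [-π/2, π/2]ⁿ`. -/
def Pcube {d n : ℕ} (A : Matrix (Fin d) (Fin n) ℤ) : Set (Fin n → ℝ) :=
  {x | x ∈ rowSpanR A ∧ ∀ j, x j ∈ Set.Icc (-(Real.pi / 2)) (Real.pi / 2)}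

/-- `𝒮_A⁺ = sin(int P)`, the coordinatewise sine image of the (relative) interior of `P`. -/
def SAplus {d n : ℕ} (A : Matrix (Fin d) (Fin n) ℤ) : Set (Fin n → ℝ) :=
  (fun x j => Real.sin (x j)) '' intrinsicInterior ℝ (Pcube A)


open Filter Topology

theorem eventually_add_smul_mem_of_mem_intrinsicInterior {E : Type*} [AddCommGroup E]
    [Module ℝ E] [TopologicalSpace E] [IsTopologicalAddGroup E] [ContinuousSMul ℝ E]
    {s : Set E} {y r : E} (hy : y ∈ intrinsicInterior ℝ s)
    (hr : r ∈ (affineSpan ℝ s).direction) :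
    ∀ᶠ t in 𝓝 (0 : ℝ), y + t • r ∈ s := by
  obtain ⟨z, hz, rfl⟩ := mem_intrinsicInterior.mp hy
  let c : ℝ → affineSpan ℝ s := fun t =>
    ⟨t • r +ᵥ (z : E), AffineSubspace.vadd_mem_of_mem_direction (Submodule.smul_mem _ t hr) z.2⟩
  have hc : Continuous c := by fun_prop
  have hc0 : c 0 = z := by ext; simp [c]
  filter_upwards [hc.continuousAt.preimage_mem_nhds (hc0 ▸ isOpen_interior.mem_nhds hz)]
    with t ht
  simpa [c, add_comm] using interior_subset ht

theorem Submodule.le_span_inter_of_mem_nhds {E : Type*} [AddCommGroup E]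
    [Module ℝ E] [TopologicalSpace E] [ContinuousSMul ℝ E]
    (S : Submodule ℝ E) {U : Set E} (hU : U ∈ 𝓝 0) : S ≤ Submodule.span ℝ (S ∩ U : Set E) := by
  intro r hr
  have hsmul : ∀ᶠ t in 𝓝[≠] (0 : ℝ), t • r ∈ U :=
    nhdsWithin_le_nhds <| tendsto_id.smul_const r (by rwa [zero_smul])
  obtain ⟨t, htU, ht0⟩ := (hsmul.and self_mem_nhdsWithin).exists
  have : t • r ∈ Submodule.span ℝ (S ∩ U : Set E) :=
    Submodule.subset_span ⟨S.smul_mem t hr, htU⟩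
  simpa [smul_smul, inv_mul_cancel₀ ht0] using Submodule.smul_mem _ t⁻¹ this

theorem sum_sum_mul_sum_mul_eq_sum_mul_sq {ι κ : Type*} [Fintype ι] [Fintype κ]
    (B : ι → κ → ℝ) (c : κ → ℝ) (v : ι → ℝ) :
    ∑ i, ∑ i', v i * (∑ l, B i l * c l * B i' l) * v i' = ∑ l, c l * (∑ i, B i l * v i) ^ 2 := by
  simp only [sq, Finset.mul_sum, Finset.sum_mul]
  rw [Finset.sum_comm_cycle]
  refine Finset.sum_congr rfl fun l _ => ?_
  rw [Finset.sum_comm]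
  exact Finset.sum_congr rfl fun i _ => Finset.sum_congr rfl fun i' _ => by ring

theorem mem_Ioo_of_add_mem_Icc_of_sub_mem_Icc {a c lo hi : ℝ} (hc : c ≠ 0)
    (hadd : a + c ∈ Set.Icc lo hi) (hsub : a - c ∈ Set.Icc lo hi) : a ∈ Set.Ioo lo hi := by
  obtain ⟨h₁, h₂⟩ := hadd
  obtain ⟨h₃, h₄⟩ := hsub
  rcases hc.lt_or_gt with hc | hc <;> constructor <;> linarith

section Polytope

variable {d n : ℕ} (A : Matrix (Fin d) (Fin n) ℤ)

theorem zero_mem_Pcube : (0 : Fin n → ℝ) ∈ Pcube A :=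
  ⟨zero_mem _, fun _ => ⟨neg_nonpos.mpr Real.pi_div_two_pos.le, Real.pi_div_two_pos.le⟩⟩

theorem rowSpanR_le_direction_affineSpan_Pcube :
    rowSpanR A ≤ (affineSpan ℝ (Pcube A)).direction := by
  have hP : (· -ᵥ (0 : Fin n → ℝ)) '' Pcube A =
      ↑(rowSpanR A) ∩ Set.univ.pi fun _ => Set.Icc (-(Real.pi / 2)) (Real.pi / 2) := by
    ext x
    simp [Pcube, Pi.le_def, forall_and]
  rw [direction_affineSpan, vectorSpan_eq_span_vsub_set_right ℝ (zero_mem_Pcube A), hP]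
  exact (rowSpanR A).le_span_inter_of_mem_nhds <| set_pi_mem_nhds Set.finite_univ fun _ _ =>
    Icc_mem_nhds (neg_lt_zero.mpr Real.pi_div_two_pos) Real.pi_div_two_pos

variable {A}

theorem mem_Ioo_of_mem_intrinsicInterior_Pcube {y : Fin n → ℝ}
    (hy : y ∈ intrinsicInterior ℝ (Pcube A)) {l : Fin n} (hl : ∃ i, A i l ≠ 0) :
    y l ∈ Set.Ioo (-(Real.pi / 2)) (Real.pi / 2) := by
  obtain ⟨i, hi⟩ := hl
  have hrow : (fun j => (A i j : ℝ)) ∈ (affineSpan ℝ (Pcube A)).direction :=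
    rowSpanR_le_direction_affineSpan_Pcube A (Submodule.subset_span ⟨i, rfl⟩)
  have hline := eventually_add_smul_mem_of_mem_intrinsicInterior hy hrow
  have hboth : ∀ᶠ t in 𝓝[≠] (0 : ℝ), (y + t • (fun j => (A i j : ℝ)) ∈ Pcube A ∧
      y + (-t) • (fun j => (A i j : ℝ)) ∈ Pcube A) ∧ t ≠ 0 :=
    ((hline.and <| (continuous_neg.tendsto' 0 0 neg_zero).eventually hline).filter_mono
      nhdsWithin_le_nhds).and self_mem_nhdsWithin
  obtain ⟨t, ⟨hplus, hminus⟩, ht⟩ := hboth.exists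
  refine mem_Ioo_of_add_mem_Icc_of_sub_mem_Icc (c := t * A i l) ?_ (hplus.2 l) ?_
  · exact mul_ne_zero ht (by exact_mod_cast hi)
  · simpa [sub_eq_add_neg] using hminus.2 l

end Polytope

section Incidence

variable {d n : ℕ} {src tgt : Fin n → Fin (d + 1)} {A : Matrix (Fin d) (Fin n) ℤ}

/-- Edge `l` runs from `src l` to `tgt l`; the row of the last vertex is deleted. -/
def IsReducedIncidence (src tgt : Fin n → Fin (d + 1)) (A : Matrix (Fin d) (Fin n) ℤ) : Prop :=
  ∀ i l, A i l = (if i.castSucc = src l then 1 else 0) - (if i.castSucc = tgt l then 1 else 0)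

theorem sum_ite_castSucc_mul_eq_snoc (v : Fin d → ℝ) (x : Fin (d + 1)) :
    ∑ i, (if i.castSucc = x then (1 : ℝ) else 0) * v i = (Fin.snoc v 0 : Fin (d + 1) → ℝ) x := by
  induction x using Fin.lastCases with
  | last => simp [(Fin.castSucc_lt_last _).ne]
  | cast j => simp [Fin.castSucc_inj]

theorem sum_incidence_mul_eq_sub
    (hA : IsReducedIncidence src tgt A)
    (v : Fin d → ℝ) (l : Fin n) :
    ∑ i, (A i l : ℝ) * v i = (Fin.snoc v 0 : Fin (d + 1) → ℝ) (src l) -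
      (Fin.snoc v 0 : Fin (d + 1) → ℝ) (tgt l) := by
  simp only [← sum_ite_castSucc_mul_eq_snoc, ← Finset.sum_sub_distrib, hA _ l]
  push_cast
  exact Finset.sum_congr rfl fun i _ => by split_ifs <;> ring

theorem exists_incidence_ne_zero
    (hA : IsReducedIncidence src tgt A)
    {l : Fin n} (hl : src l ≠ tgt l) : ∃ i, A i l ≠ 0 := by
  by_contra! hcol
  -- the potential `x ↦ x - d` separates any two vertices
  have hsnoc : ∀ x : Fin (d + 1),
      (Fin.snoc (fun i : Fin d => (i : ℝ) - d) 0 : Fin (d + 1) → ℝ) x = (x : ℝ) - d := by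
    intro x
    induction x using Fin.lastCases <;> simp
  have := sum_incidence_mul_eq_sub hA (fun i => (i : ℝ) - d) l
  simp only [hcol, Int.cast_zero, zero_mul, Finset.sum_const_zero, hsnoc] at this
  exact hl (Fin.ext (by exact_mod_cast sub_left_inj.mp (sub_eq_zero.mp this.symm)))

theorem eq_zero_of_forall_sum_incidence_mul_eq_zero
    (hA : IsReducedIncidence src tgt A)
    {G : SimpleGraph (Fin (d + 1))} (hconn : G.Connected)
    (hedges : ∀ e ∈ G.edgeSet, ∃ l : Fin n, e = s(src l, tgt l))
    {v : Fin d → ℝ} (hv : ∀ l, ∑ i, (A i l : ℝ) * v i = 0) : v = 0 := by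
  classical
  have hadj : ∀ u w, G.Adj u w → (Fin.snoc v 0 : Fin (d + 1) → ℝ) u =
      (Fin.snoc v 0 : Fin (d + 1) → ℝ) w := by
    intro u w huw
    obtain ⟨l, hl⟩ := hedges s(u, w) huw
    have := sum_incidence_mul_eq_sub hA v l
    rcases Sym2.eq_iff.mp hl with ⟨rfl, rfl⟩ | ⟨rfl, rfl⟩ <;> linarith [hv l]
  -- a function that is constant along edges is constant on connected components
  have hconst := G.lapMatrix_mulVec_eq_zero_iff_forall_reachable.mp
    (G.lapMatrix_mulVec_eq_zero_iff_forall_adj.mpr hadj)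
  funext i
  simpa using hconst i.castSucc (Fin.last d) (hconn i.castSucc (Fin.last d))

end Incidence

/-- Proposition 4.5: for the Kuramoto model of a connected graph `G` with reduced
incidence matrix `A`, if `ω/K ∈ Ω⁺` then the point `θ*` with `Aᵀθ* = arcsin(x*)`
is a linearly stable steady state: the equations hold, `cos(a_ℓ·θ*) > 0`, and the
Jacobian is negative definite. -/
theorem stmt11 {d n : ℕ} (G : SimpleGraph (Fin (d + 1))) (hconn : G.Connected)
    (src tgt : Fin n → Fin (d + 1))
    (hadj : ∀ l, G.Adj (src l) (tgt l))
    (hedges : ∀ e ∈ G.edgeSet, ∃! l : Fin n, e = s(src l, tgt l))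
    (A : Matrix (Fin d) (Fin n) ℤ)
    (hA : ∀ (i : Fin d) (l : Fin n), A i l =
      (if i.castSucc = src l then 1 else 0) - (if i.castSucc = tgt l then 1 else 0))
    (K : ℝ) (hK : 0 < K) (ω : Fin d → ℝ)
    (xstar : Fin n → ℝ) (hx : xstar ∈ SAplus A)
    (hAx : ∀ i, ∑ j, (A i j : ℝ) * xstar j = ω i / K)
    (θstar : Fin d → ℝ)
    (hθ : ∀ l, ∑ i, (A i l : ℝ) * θstar i = Real.arcsin (xstar l)) :
    (∀ i, ω i - K * ∑ l, (A i l : ℝ) * Real.sin (∑ i', (A i' l : ℝ) * θstar i') = 0) ∧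
    (∀ l, 0 < Real.cos (∑ i, (A i l : ℝ) * θstar i)) ∧
    (∀ v : Fin d → ℝ, v ≠ 0 →
      ∑ i, ∑ i', v i * (-(K * ∑ l, (A i l : ℝ) *
        Real.cos (∑ i'', (A i'' l : ℝ) * θstar i'') * (A i' l : ℝ))) * v i' < 0) := by
  obtain ⟨y, hy, rfl⟩ := hx
  have hyIoo : ∀ l, y l ∈ Set.Ioo (-(Real.pi / 2)) (Real.pi / 2) := fun l =>
    mem_Ioo_of_mem_intrinsicInterior_Pcube hy (exists_incidence_ne_zero hA (hadj l).ne)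
  have hθy : ∀ l, ∑ i, (A i l : ℝ) * θstar i = y l := fun l =>
    (hθ l).trans (Real.arcsin_sin (hyIoo l).1.le (hyIoo l).2.le)
  have hcos : ∀ l, 0 < Real.cos (∑ i, (A i l : ℝ) * θstar i) := fun l => by
    rw [hθy]; exact Real.cos_pos_of_mem_Ioo (hyIoo l)
  refine ⟨fun i => ?_, hcos, fun v hv => ?_⟩
  · simp only [hθy, hAx i]
    field_simp
    ring
  · obtain ⟨l₀, hl₀⟩ : ∃ l, ∑ i, (A i l : ℝ) * v i ≠ 0 := by
      contrapose! hv
      exact eq_zero_of_forall_sum_incidence_mul_eq_zero hA hconn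
        (fun e he => (hedges e he).exists) hv
    have hform :
        0 < ∑ l, Real.cos (∑ i, (A i l : ℝ) * θstar i) * (∑ i, (A i l : ℝ) * v i) ^ 2 :=
      Finset.sum_pos' (fun l _ => mul_nonneg (hcos l).le (sq_nonneg _))
        ⟨l₀, Finset.mem_univ _, mul_pos (hcos l₀) (sq_pos_of_ne_zero hl₀)⟩
    rw [← sum_sum_mul_sum_mul_eq_sum_mul_sq] at hform
    simp only [mul_neg, neg_mul, Finset.sum_neg_distrib, neg_lt_zero, mul_left_comm (v _) K,
      mul_assoc K, ← Finset.mul_sum]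
    exact mul_pos hK hform
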